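/- Let M3^b be the five-element bounded lattice whose middle elements form a three-element antichain, and let F be the free bounded lattice of denumerable rank for the variety V = V(M3^b). Then M3^b admits no homomorphism of bounded lattices into F. -/

import Mathlib

/-- A bundled bounded lattice. -/
structure BLat where
  carrier : Type
  [lat : Lattice carrier]
  [bdd : BoundedOrder carrier]

attribute [instance] BLat.lat BLat.bdd

/-- Direct product of a family of bounded lattices. -/
def BLat.pi {I : Type} (A : I → BLat) : BLat := ⟨∀ i, (A i).carrier⟩

/-- A class of bounded lattices is a variety if it is closed under homomorphic images,
subalgebras (injective bounded lattice homomorphisms) and direct products. -/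
def IsBLatVariety (V : Set BLat) : Prop :=
  (∀ A ∈ V, ∀ B : BLat, ∀ f : BoundedLatticeHom A.carrier B.carrier,
      Function.Surjective f → B ∈ V) ∧
  (∀ A : BLat, ∀ B ∈ V, ∀ f : BoundedLatticeHom A.carrier B.carrier,
      Function.Injective f → A ∈ V) ∧
  (∀ (I : Type) (A : I → BLat), (∀ i, A i ∈ V) → BLat.pi A ∈ V)

/-! The five-element lattice `M3` (diamond): bottom `o`, top `i`, and a three-element
antichain `a`, `b`, `c` in the middle. -/

inductive M3T | o | a | b | c | i
deriving DecidableEq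

instance : Fintype M3T :=
  ⟨⟨{M3T.o, M3T.a, M3T.b, M3T.c, M3T.i}, by decide⟩, fun x => by cases x <;> decide⟩

namespace M3T

def leB : M3T → M3T → Bool
  | .o, _ => true
  | _, .i => true
  | .a, .a => true
  | .b, .b => true
  | .c, .c => true
  | _, _ => false

def supF : M3T → M3T → M3T
  | .o, x => x
  | x, .o => x
  | .a, .a => .a
  | .b, .b => .b
  | .c, .c => .c
  | _, _ => .i

def infF : M3T → M3T → M3T
  | .i, x => x
  | x, .i => x
  | .a, .a => .a
  | .b, .b => .b
  | .c, .c => .c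
  | _, _ => .o

instance : PartialOrder M3T where
  le x y := leB x y = true
  le_refl := (by decide : ∀ a : M3T, leB a a = true)
  le_trans := (by decide : ∀ a b c : M3T, leB a b = true → leB b c = true → leB a c = true)
  le_antisymm := (by decide : ∀ a b : M3T, leB a b = true → leB b a = true → a = b)

instance : Lattice M3T where
  sup := supF
  le_sup_left := (by decide : ∀ a b : M3T, leB a (supF a b) = true)
  le_sup_right := (by decide : ∀ a b : M3T, leB b (supF a b) = true)
  sup_le := (by decide : ∀ a b c : M3T, leB a c = true → leB b c = true → leB (supF a b) c = true)
  inf := infF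
  inf_le_left := (by decide : ∀ a b : M3T, leB (infF a b) a = true)
  inf_le_right := (by decide : ∀ a b : M3T, leB (infF a b) b = true)
  le_inf := (by decide : ∀ a b c : M3T, leB a b = true → leB a c = true → leB a (infF b c) = true)

instance : BoundedOrder M3T where
  top := .i
  le_top := (by decide : ∀ a : M3T, leB a .i = true)
  bot := .o
  bot_le := (by decide : ∀ a : M3T, leB .o a = true)

end M3T

/-- The bounded lattice `M3ᵇ`. -/
def M3b : BLat := ⟨M3T⟩

/-- `F` is free for `V` over the countably infinite set of generators `x 0, x 1, …`. -/
def IsFreeOverNat (V : Set BLat) (F : BLat) (x : ℕ → F.carrier) : Prop :=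
  F ∈ V ∧ ∀ A ∈ V, ∀ g : ℕ → A.carrier,
    ∃! h : BoundedLatticeHom F.carrier A.carrier, ∀ n, h (x n) = g n

/-!
Freeness of `F` gives a homomorphism from `F` into any algebra of `V`, in particular into the
two-element lattice `Bool`, which lies in `V` as the sublattice `{⊥, ⊤}` of `M3ᵇ`. Composing
with a homomorphism `M3ᵇ → F` would give a bounded lattice homomorphism `M3ᵇ → Bool`. But the
atoms `a, b, c` of `M3ᵇ` are pairwise complementary, complements are preserved, and in the
distributive lattice `Bool` complements are unique: the images of `b` and `c` would coincide while
being complements of each other, forcing `⊥ = ⊤`.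
-/

def BoundedLatticeHom.ofBool (α : Type*) [Lattice α] [BoundedOrder α] :
    BoundedLatticeHom Bool α where
  toFun b := cond b ⊤ ⊥
  map_sup' a b := by cases a <;> cases b <;> simp
  map_inf' a b := by cases a <;> cases b <;> simp
  map_top' := rfl
  map_bot' := rfl

theorem BoundedLatticeHom.ofBool_injective {α : Type*} [Lattice α] [BoundedOrder α]
    (h : (⊥ : α) ≠ ⊤) : Function.Injective (BoundedLatticeHom.ofBool α) := by
  intro a b hab
  cases a <;> cases b <;> simp_all [ofBool, eq_comm]

theorem IsBLatVariety.bool_mem {V : Set BLat} (hV : IsBLatVariety V) {A : BLat} (hA : A ∈ V)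
    (h : (⊥ : A.carrier) ≠ ⊤) : (⟨Bool⟩ : BLat) ∈ V :=
  hV.2.1 ⟨Bool⟩ A hA (BoundedLatticeHom.ofBool A.carrier) (BoundedLatticeHom.ofBool_injective h)

theorem BoundedLatticeHom.bot_eq_top_of_isCompl {α β : Type*} [Lattice α] [BoundedOrder α]
    [DistribLattice β] [BoundedOrder β] (f : BoundedLatticeHom α β) {a b c : α}
    (hab : IsCompl a b) (hac : IsCompl a c) (hbc : IsCompl b c) : (⊥ : β) = ⊤ := by
  have hfbc : f b = f c := (hab.map f).right_unique (hac.map f)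
  have hself : IsCompl (f b) (f b) := hfbc ▸ hbc.map f
  exact (disjoint_self.1 hself.1).symm.trans (codisjoint_self.1 hself.2)

namespace M3T

theorem isCompl_a_b : IsCompl a b := IsCompl.of_eq rfl rfl

theorem isCompl_a_c : IsCompl a c := IsCompl.of_eq rfl rfl

theorem isCompl_b_c : IsCompl b c := IsCompl.of_eq rfl rfl

end M3T

theorem stmt19_general (V : Set BLat) (hV : IsBLatVariety V) (hM3 : M3b ∈ V)
    (F : BLat) (x : ℕ → F.carrier) (hF : IsFreeOverNat V F x) :
    ¬ Nonempty (BoundedLatticeHom M3b.carrier F.carrier) := by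
  rintro ⟨f⟩
  have hBool : (⟨Bool⟩ : BLat) ∈ V := hV.bool_mem hM3 nofun
  obtain ⟨e, -⟩ := hF.2 ⟨Bool⟩ hBool fun _ => false
  exact Bool.false_ne_true <|
    (e.comp f).bot_eq_top_of_isCompl M3T.isCompl_a_b M3T.isCompl_a_c M3T.isCompl_b_c

/-- let `V = V(M3ᵇ)` be the variety generated by the bounded lattice
`M3ᵇ` (the least variety containing it), and let `F` be the free bounded lattice of
denumerable rank for `V`.  Then there is no bounded lattice homomorphism from `M3ᵇ`
into `F`. -/
theorem stmt19 (V : Set BLat) (hV : IsBLatVariety V) (hM3 : M3b ∈ V)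
    (hmin : ∀ W : Set BLat, IsBLatVariety W → M3b ∈ W → V ⊆ W)
    (F : BLat) (x : ℕ → F.carrier) (hF : IsFreeOverNat V F x) :
    ¬ Nonempty (BoundedLatticeHom M3b.carrier F.carrier) :=
  stmt19_general V hV hM3 F x hF
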